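/- arXiv:1007.0532 — 3 statements merged into one kernel-verified Lean document; each statement's English description precedes it below -/
import Mathlib

section
/- If S is a subring of finite index of a ring R, then R has a two-sided ideal of finite index contained in S. -/
/-- The additive subgroup underlying a two-sided ideal of a (possibly non-unital) ring. -/
def TwoSidedIdeal.addSubgroup {R : Type*} [NonUnitalNonAssocRing R] (I : TwoSidedIdeal R) :
    AddSubgroup R where
  carrier := I
  add_mem' := fun ha hb => I.add_mem ha hb
  zero_mem' := I.zero_mem
  neg_mem' := fun ha => I.neg_mem ha

/-!
The largest two-sided ideal contained in `S` consists of the `x` with `x, xR, Rx, RxR ⊆ S`.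
Since `S` is a subring, for `x ∈ S` the condition `r * x ∈ S` only depends on the coset `r + S`
(and similarly for the other conditions), so this ideal is cut out by finitely many conditions,
one per coset representative (or pair of them). Each condition defines the preimage of `S` under
an additive map, a subgroup of finite index, and a finite intersection of those has finite index.
-/

namespace Subgroup

variable {G G' : Type*} [Group G] [Group G']

@[to_additive]
instance finiteIndex_comap (H : Subgroup G') [H.FiniteIndex] (f : G →* G') :
    (H.comap f).FiniteIndex :=
  ⟨H.index_comap f ▸ (isFiniteRelIndex_of_finiteIndex (K := f.range)).relIndex_ne_zero⟩

@[to_additive]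
theorem eq_top_of_le_of_forall_out_mem {H K : Subgroup G} (hHK : H ≤ K)
    (hK : ∀ q : G ⧸ H, q.out ∈ K) : K = ⊤ := by
  refine (eq_top_iff' K).2 fun g => ?_
  have hg : (g : G ⧸ H).out⁻¹ * g ∈ H := QuotientGroup.eq.1 (QuotientGroup.out_eq' (g : G ⧸ H))
  simpa using K.mul_mem (hK g) (hHK hg)

end Subgroup

namespace AddSubgroup

variable {R : Type*} [NonUnitalRing R]

def idealCore (A : AddSubgroup R) : TwoSidedIdeal R :=
  .mk' {x | x ∈ A ∧ (∀ r, x * r ∈ A) ∧ (∀ r, r * x ∈ A) ∧ ∀ r s, r * x * s ∈ A}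
    (by simp)
    (by
      rintro x y ⟨hx, hxr, hrx, hrxs⟩ ⟨hy, hyr, hry, hrys⟩
      simp_all [mul_add, add_mul, add_mem])
    (by
      rintro x ⟨hx, hxr, hrx, hrxs⟩
      simp_all)
    (by
      rintro x y ⟨-, -, hry, hrys⟩
      refine ⟨hry x, fun r => hrys x r, fun r => ?_, fun r s => ?_⟩
      · simpa [mul_assoc] using hry (r * x)
      · simpa [mul_assoc] using hrys (r * x) s)
    (by
      rintro x y ⟨-, hxr, -, hrxs⟩
      refine ⟨hxr y, fun r => ?_, fun r => by simpa [mul_assoc] using hrxs r y, fun r s => ?_⟩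
      · simpa [mul_assoc] using hxr (y * r)
      · simpa [mul_assoc] using hrxs r (y * s))

theorem mem_idealCore {A : AddSubgroup R} {x : R} :
    x ∈ A.idealCore ↔ x ∈ A ∧ (∀ r, x * r ∈ A) ∧ (∀ r, r * x ∈ A) ∧ ∀ r s, r * x * s ∈ A :=
  TwoSidedIdeal.mem_mk' ..

theorem idealCore_subset (A : AddSubgroup R) : (A.idealCore : Set R) ⊆ A :=
  fun _ hx => (mem_idealCore.1 hx).1

open AddMonoidHom in
theorem _root_.NonUnitalSubring.finiteIndex_idealCore (S : NonUnitalSubring R)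
    [S.toAddSubgroup.FiniteIndex] : S.toAddSubgroup.idealCore.addSubgroup.FiniteIndex := by
  set A := S.toAddSubgroup
  let K : AddSubgroup R :=
    A ⊓ (⨅ q : R ⧸ A, A.comap (mulRight q.out)) ⊓ (⨅ q : R ⧸ A, A.comap (mulLeft q.out)) ⊓
      ⨅ (q : R ⧸ A) (p : R ⧸ A), A.comap ((mulRight p.out).comp (mulLeft q.out))
  have : K.FiniteIndex := by
    have := finiteIndex_iInf fun q : R ⧸ A => finiteIndex_iInf fun p : R ⧸ A =>
      A.finiteIndex_comap ((mulRight p.out).comp (mulLeft q.out))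
    have := finiteIndex_iInf fun q : R ⧸ A => A.finiteIndex_comap (mulRight q.out)
    have := finiteIndex_iInf fun q : R ⧸ A => A.finiteIndex_comap (mulLeft q.out)
    infer_instance
  refine finiteIndex_of_le (H := K) fun x hx => ?_
  simp only [K, mem_inf, mem_iInf, mem_comap, coe_comp, Function.comp_apply, coe_mulLeft,
    coe_mulRight] at hx
  obtain ⟨⟨⟨hx, hxq⟩, hqx⟩, hqxp⟩ := hx
  have spread (f : R →+ R) (hf : A ≤ A.comap f) (hq : ∀ q : R ⧸ A, f q.out ∈ A) (r : R) :
      f r ∈ A :=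
    (eq_top_iff' _).1 (eq_top_of_le_of_forall_out_mem hf hq) r
  have hxr (r : R) : x * r ∈ S := spread (mulLeft x) (fun _ => S.mul_mem hx) hxq r
  have hrx (r : R) : r * x ∈ S := spread (mulRight x) (fun _ hs => S.mul_mem hs hx) hqx r
  have hrxp (r : R) (p : R ⧸ A) : r * x * p.out ∈ S := by
    rw [mul_assoc]
    refine spread (mulRight (x * p.out)) (fun _ hs => S.mul_mem hs (hxr _)) (fun q => ?_) r
    rw [mulRight_apply, ← mul_assoc]
    exact hqxp q p
  have hrxs (r s : R) : r * x * s ∈ S :=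
    spread (mulLeft (r * x)) (fun _ => S.mul_mem (hrx r)) (hrxp r) s
  exact mem_idealCore.2 ⟨hx, hxr, hrx, hrxs⟩

end AddSubgroup

/-- If `S` is a (non-unital) subring of finite index of a ring `R`, then `R` has a
two-sided ideal of finite index contained in `S`. -/
theorem exists_ideal_finiteIndex_le_of_subring_finiteIndex
    (R : Type*) [NonUnitalRing R] (S : NonUnitalSubring R)
    (hS : S.toAddSubgroup.FiniteIndex) :
    ∃ I : TwoSidedIdeal R, I.addSubgroup.FiniteIndex ∧ (I : Set R) ⊆ (S : Set R) :=
  ⟨S.toAddSubgroup.idealCore, S.finiteIndex_idealCore, S.toAddSubgroup.idealCore_subset⟩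
end

section
/- Let R be a ring (associative, possibly non-unital), and let T be a ring with identity containing R as a two-sided ideal (for instance the unitization T = Unitization ℤ R). Let U be the group of 3×3 matrices over T with 1's on the diagonal, 0's below the diagonal, and entries from R above the diagonal (a subgroup of the group of units of the 3×3 matrix ring over T). If U has an abelian subgroup of finite index, then R has a null two-sided ideal of finite index. -/
/-!
Pull an abelian subgroup `A` of finite index in `U` back along the homomorphisms
`r ↦ 1 + r e₀₁` and `r ↦ 1 + r e₁₂` from `(R, +)` into `U`; the intersection `C` of the two
preimages has finite index in `R`. For `x, y ∈ C` the matrices `1 + x e₀₁` and `1 + y e₁₂` lie in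
`A`, and the `(0, 2)` entries of their two products are `xy` and `0`, so `C` is null.

A null additive subgroup `C` of finite index contains a two-sided ideal of finite index, namely
`{x ∈ D | xR ⊆ D}` with `D = {x ∈ C | Rx ⊆ C}`. Since `CC = 0`, for `x ∈ C` the product `sx`
depends only on the class of `s` modulo `C`, so `D` is cut out of `C` by finitely many
finite-index conditions, and likewise for the second step.
-/

namespace Matrix

variable {n R : Type*} [DecidableEq n]

lemma one_add_single_upper_unitriangular [Preorder n] [Semiring R] {S : Set R}
    (hS : (0 : R) ∈ S) {i j : n} (hij : i < j) {c : R} (hc : c ∈ S) :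
    (∀ k l, l < k → (1 + single i j c) k l = 0) ∧ (∀ k, (1 + single i j c) k k = 1) ∧
      (∀ k l, k < l → (1 + single i j c) k l ∈ S) := by
  refine ⟨fun k l hlk => ?_, fun k => ?_, fun k l hkl => ?_⟩
  · rw [add_apply, one_apply_ne hlk.ne', zero_add, single_apply]
    split_ifs with h
    · obtain ⟨rfl, rfl⟩ := h
      exact absurd hij (lt_asymm hlk)
    · rfl
  · rw [add_apply, one_apply_eq, single_apply_of_ne (h := fun h => hij.ne (h.1.trans h.2.symm)),
      add_zero]
  · rw [add_apply, one_apply_ne hkl.ne, zero_add, single_apply]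
    split_ifs <;> assumption

variable [Fintype n]

lemma one_add_single_mul_one_add_single [Semiring R] {i j : n} (hij : i ≠ j) (a b : R) :
    (1 + single i j a) * (1 + single i j b) = 1 + single i j (a + b) := by
  simp [Matrix.add_mul, Matrix.mul_add, hij.symm, single_add, add_assoc]

def elementaryHom [Ring R] {i j : n} (hij : i ≠ j) : Multiplicative R →* (Matrix n n R)ˣ :=
  MonoidHom.toHomUnits
    { toFun := fun c => 1 + single i j c.toAdd
      map_one' := by simp
      map_mul' := fun c d => (one_add_single_mul_one_add_single hij c.toAdd d.toAdd).symm }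

lemma mul_eq_zero_of_commute_one_add_single [Semiring R] {i j k : n} (hij : i ≠ j)
    (hjk : j ≠ k) (hik : i ≠ k) {a b : R}
    (h : Commute (1 + single i j a) (1 + single j k b)) : a * b = 0 := by
  simpa [hij.symm, hik, hjk, hjk.symm, Matrix.add_mul, Matrix.mul_add] using congrFun₂ h.eq i k

end Matrix

lemma Subgroup.finiteIndex_comap_of_forall_mem {G H : Type*} [Group G] [Group H]
    {A U : Subgroup H} (hA : A.relIndex U ≠ 0) {f : G →* H} (hf : ∀ g, f g ∈ U) :
    (A.comap f).FiniteIndex := by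
  have := relIndex_comap_ne_zero f hA
  rw [show U.comap f = ⊤ from eq_top_iff.2 fun g _ => hf g, relIndex_top_right] at this
  exact ⟨this⟩

namespace AddSubgroup

lemma finiteIndex_inf_iInf_comap {G : Type*} [AddGroup G] (C : AddSubgroup G) [C.FiniteIndex]
    (f : G → G →+ G) (hf : ∀ s, ∀ c ∈ C, ∀ x ∈ C, f (s + c) x = f s x) :
    (C ⊓ ⨅ s, C.comap (f s)).FiniteIndex := by
  set K : G → AddSubgroup G := fun s => C ⊓ C.comap (f s)
  have hK : ∀ s, ∀ c ∈ C, K (s + c) = K s := fun s c hc => by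
    ext x
    simp only [K, mem_inf, mem_comap, and_congr_right_iff]
    intro hx
    rw [hf s c hc x hx]
  -- `K` factors through the finite quotient `G ⧸ C`
  have : Finite (Set.range K) := by
    refine Set.Finite.to_subtype <|
      (Set.finite_range (K ∘ Quotient.out : G ⧸ C → _)).subset ?_
    rintro _ ⟨s, rfl⟩
    obtain ⟨c, hc⟩ := QuotientAddGroup.mk_out_eq_add C s
    exact ⟨s, by simp [hc, hK s c c.2]⟩
  have hKfin : ∀ s, (K s).FiniteIndex := fun s => by
    have : (C.comap (f s)).FiniteIndex :=
      ⟨by rw [index_comap]; exact isFiniteRelIndex_of_finiteIndex.relIndex_ne_zero⟩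
    infer_instance
  rw [inf_iInf, ← iInf_range' (fun H : AddSubgroup G => H) K]
  exact finiteIndex_iInf fun ⟨_, s, hs⟩ => hs ▸ hKfin s

variable {R : Type*} [NonUnitalRing R] (C : AddSubgroup R)

def leftCore : AddSubgroup R := C ⊓ ⨅ s, C.comap (AddMonoidHom.mulLeft s)

def rightCore : AddSubgroup R := C ⊓ ⨅ t, C.comap (AddMonoidHom.mulRight t)

variable {C}

lemma mem_leftCore {x : R} : x ∈ C.leftCore ↔ x ∈ C ∧ ∀ s, s * x ∈ C := by
  simp [leftCore]

lemma mem_rightCore {x : R} : x ∈ C.rightCore ↔ x ∈ C ∧ ∀ t, x * t ∈ C := by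
  simp [rightCore]

lemma mul_mem_leftCore {x : R} (hx : x ∈ C.leftCore) (s : R) : s * x ∈ C.leftCore := by
  rw [mem_leftCore] at hx ⊢
  exact ⟨hx.2 s, fun s' => mul_assoc s' s x ▸ hx.2 (s' * s)⟩

lemma mul_mem_rightCore {x : R} (hx : x ∈ C.rightCore) (t : R) : x * t ∈ C.rightCore := by
  rw [mem_rightCore] at hx ⊢
  exact ⟨hx.2 t, fun t' => (mul_assoc x t t').symm ▸ hx.2 (t * t')⟩

lemma mul_mem_rightCore_of_mul_mem {x : R} (hC : ∀ s, ∀ y ∈ C, s * y ∈ C)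
    (hx : x ∈ C.rightCore) (s : R) : s * x ∈ C.rightCore := by
  rw [mem_rightCore] at hx ⊢
  exact ⟨hC s x hx.1, fun t => (mul_assoc s x t).symm ▸ hC s _ (hx.2 t)⟩

lemma finiteIndex_leftCore [C.FiniteIndex] (hC : ∀ x ∈ C, ∀ y ∈ C, x * y = 0) :
    C.leftCore.FiniteIndex :=
  finiteIndex_inf_iInf_comap C _ fun s c hc x hx => by simp [add_mul, hC c hc x hx]

lemma finiteIndex_rightCore [C.FiniteIndex] (hC : ∀ x ∈ C, ∀ y ∈ C, x * y = 0) :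
    C.rightCore.FiniteIndex :=
  finiteIndex_inf_iInf_comap C _ fun s c hc x hx => by simp [mul_add, hC x hx c hc]

variable (C)

def twoSidedCore : TwoSidedIdeal R :=
  .mk' C.leftCore.rightCore (zero_mem _) (add_mem · ·) (neg_mem ·)
    (fun hx => mul_mem_rightCore_of_mul_mem (fun s _ hy => mul_mem_leftCore hy s) hx _)
    (fun hx => mul_mem_rightCore hx _)

variable {C} in
lemma mem_twoSidedCore {x : R} : x ∈ C.twoSidedCore ↔ x ∈ C.leftCore.rightCore :=
  TwoSidedIdeal.mem_mk' ..

lemma twoSidedCore_addSubgroup : C.twoSidedCore.addSubgroup = C.leftCore.rightCore :=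
  AddSubgroup.ext fun _ => mem_twoSidedCore

variable {C} in
lemma mem_of_mem_twoSidedCore {x : R} (hx : x ∈ C.twoSidedCore) : x ∈ C :=
  (mem_leftCore.1 (mem_rightCore.1 (mem_twoSidedCore.1 hx)).1).1

lemma finiteIndex_twoSidedCore [C.FiniteIndex] (hC : ∀ x ∈ C, ∀ y ∈ C, x * y = 0) :
    C.twoSidedCore.addSubgroup.FiniteIndex := by
  have := finiteIndex_leftCore hC
  rw [twoSidedCore_addSubgroup]
  exact finiteIndex_rightCore fun x hx y hy => hC x (mem_leftCore.1 hx).1 y (mem_leftCore.1 hy).1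

end AddSubgroup

theorem null_ideal_of_abelian_finiteIndex_subgroup_UT3_general
    (R : Type*) [NonUnitalRing R] (T : Type*) [Ring T] (ι : R →ₙ+* T)
    (hinj : Function.Injective ι)
    (U : Subgroup (Matrix (Fin 3) (Fin 3) T)ˣ)
    (hU : ∀ u : (Matrix (Fin 3) (Fin 3) T)ˣ, u ∈ U ↔
      ((∀ i j : Fin 3, j < i → u.val i j = 0) ∧
       (∀ i : Fin 3, u.val i i = 1) ∧
       (∀ i j : Fin 3, i < j → u.val i j ∈ Set.range ι)))
    (A : Subgroup (Matrix (Fin 3) (Fin 3) T)ˣ)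
    (hab : ∀ a ∈ A, ∀ b ∈ A, a * b = b * a)
    (hfin : A.relIndex U ≠ 0) :
    ∃ I : TwoSidedIdeal R, I.addSubgroup.FiniteIndex ∧ ∀ x ∈ I, ∀ y ∈ I, x * y = 0 := by
  have h01 : (0 : Fin 3) < 1 := by decide
  have h12 : (1 : Fin 3) < 2 := by decide
  let ιm : Multiplicative R →* Multiplicative T := AddMonoidHom.toMultiplicative ι.toAddMonoidHom
  have hmemU {i j : Fin 3} (hij : i < j) (r : Multiplicative R) :
      (Matrix.elementaryHom hij.ne).comp ιm r ∈ U :=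
    (hU _).2 (Matrix.one_add_single_upper_unitriangular (S := Set.range ι) ⟨0, map_zero ι⟩ hij
      ⟨r.toAdd, rfl⟩)
  let C : AddSubgroup R := Subgroup.toAddSubgroup'
    (A.comap ((Matrix.elementaryHom h01.ne).comp ιm) ⊓
      A.comap ((Matrix.elementaryHom h12.ne).comp ιm))
  have : C.FiniteIndex := by
    have := Subgroup.finiteIndex_comap_of_forall_mem hfin (hmemU h01)
    have := Subgroup.finiteIndex_comap_of_forall_mem hfin (hmemU h12)
    exact (AddSubgroup.finiteIndex_toSubgroup_iff C).1 (inferInstanceAs (Subgroup.FiniteIndex (_ ⊓ _)))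
  have hC : ∀ x ∈ C, ∀ y ∈ C, x * y = 0 := by
    intro x hx y hy
    apply hinj
    rw [map_mul, map_zero]
    exact Matrix.mul_eq_zero_of_commute_one_add_single h01.ne h12.ne (by decide)
      (congrArg Units.val (hab _ hx.1 _ hy.2))
  exact ⟨C.twoSidedCore, C.finiteIndex_twoSidedCore hC, fun x hx y hy =>
    hC x (AddSubgroup.mem_of_mem_twoSidedCore hx) y (AddSubgroup.mem_of_mem_twoSidedCore hy)⟩

/-- Let `R` be a (possibly non-unital) ring embedded, via an injective non-unital ring
homomorphism `ι`, as a two-sided ideal of a unital ring `T`.  Let `U` be the group of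
upper unitriangular 3×3 matrices over `T` whose above-diagonal entries lie in `ι(R)`
(a subgroup of the units of the 3×3 matrix ring over `T`).  If `U` has an abelian
subgroup of finite index, then `R` has a null two-sided ideal of finite index. -/
theorem null_ideal_of_abelian_finiteIndex_subgroup_UT3
    (R : Type*) [NonUnitalRing R] (T : Type*) [Ring T] (ι : R →ₙ+* T)
    (hinj : Function.Injective ι)
    (hleft : ∀ t : T, ∀ r : R, t * ι r ∈ Set.range ι)
    (hright : ∀ t : T, ∀ r : R, ι r * t ∈ Set.range ι)
    (U : Subgroup (Matrix (Fin 3) (Fin 3) T)ˣ)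
    (hU : ∀ u : (Matrix (Fin 3) (Fin 3) T)ˣ, u ∈ U ↔
      ((∀ i j : Fin 3, j < i → u.val i j = 0) ∧
       (∀ i : Fin 3, u.val i i = 1) ∧
       (∀ i j : Fin 3, i < j → u.val i j ∈ Set.range ι)))
    (A : Subgroup (Matrix (Fin 3) (Fin 3) T)ˣ) (hAU : A ≤ U)
    (hab : ∀ a ∈ A, ∀ b ∈ A, a * b = b * a)
    (hfin : A.relIndex U ≠ 0) :
    ∃ I : TwoSidedIdeal R, I.addSubgroup.FiniteIndex ∧ ∀ x ∈ I, ∀ y ∈ I, x * y = 0 :=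
  null_ideal_of_abelian_finiteIndex_subgroup_UT3_general R T ι hinj U hU A hab hfin
end

section
/- Let R be a Hausdorff topological ring with a null two-sided ideal S of finite index. Then there is a finite subset F of S such that Ann_R(F) = Ann_R(S) and Ann_R(Ann_R(F)) is a closed null two-sided ideal of R of finite index containing S; consequently, every ring automorphism of R fixing F pointwise maps Ann_R(Ann_R(F)) onto itself. -/
/-- The two-sided annihilator of a set \`s\` in a ring: all \`r\` with \`r * a = a * r = 0\`
for every \`a ∈ s\`. -/
def annSet {R : Type*} [NonUnitalNonAssocRing R] (s : Set R) : Set R :=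
  {r : R | ∀ a ∈ s, r * a = 0 ∧ a * r = 0}

/-!
As `S` is null, for every finite `F ⊆ S` the annihilator `Ann(F)` is an additive subgroup
containing `S`. A finite-index subgroup lies in only finitely many subgroups, so some `Ann(F)` is
minimal among these, and comparing it with `Ann(F ∪ {a})` for `a ∈ S` gives `Ann(F) = Ann(S)`.
Then `I = Ann(Ann(S))` is an ideal containing `S`, hence of finite index; it is closed as an
intersection of zero sets of continuous maps; it is null because `S ⊆ Ann(S)` forces
`I ⊆ Ann(S)`; and an automorphism fixing `F` fixes `Ann(Ann(F)) = I`, since annihilators are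
transported by automorphisms.
-/

@[to_additive]
theorem Subgroup.finite_setOf_le_of_finiteIndex {G : Type*} [Group G] (N : Subgroup G)
    [N.FiniteIndex] : {K : Subgroup G | N ≤ K}.Finite := by
  have : Finite (G ⧸ N) := Subgroup.finite_quotient_of_finiteIndex
  refine Set.Finite.of_finite_image
    (f := fun K : Subgroup G => (QuotientGroup.mk '' (K : Set G) : Set (G ⧸ N))) (Set.toFinite _)
    fun K hK K' hK' hKK' => SetLike.coe_injective ?_
  -- a subgroup containing `N` is a union of `N`-cosets, so it is determined by its image in `G ⧸ N`
  have hsat : ∀ K : Subgroup G, N ≤ K →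
      QuotientGroup.mk ⁻¹' (QuotientGroup.mk '' (K : Set G) : Set (G ⧸ N)) = K := fun K hK => by
    rw [QuotientGroup.preimage_image_mk_eq_mul]
    exact (Set.mul_subset_iff.2 fun x hx y hy => K.mul_mem hx (hK hy)).antisymm
      fun x hx => ⟨x, hx, 1, N.one_mem, mul_one x⟩
  rw [← hsat K hK, ← hsat K' hK']
  exact congrArg _ hKK'

section NonAssoc

variable {R : Type*} [NonUnitalNonAssocRing R]

theorem annSet_anti {s t : Set R} (h : s ⊆ t) : annSet t ⊆ annSet s :=
  fun _ hr a ha => hr a (h ha)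

theorem subset_annSet_annSet (s : Set R) : s ⊆ annSet (annSet s) :=
  fun a ha _ hr => (hr a ha).symm

def annAddSubgroup (s : Set R) : AddSubgroup R where
  carrier := annSet s
  add_mem' {x y} hx hy a ha := by
    simp only [add_mul, mul_add, (hx a ha).1, (hx a ha).2, (hy a ha).1, (hy a ha).2, add_zero,
      and_self]
  zero_mem' a _ := ⟨zero_mul a, mul_zero a⟩
  neg_mem' {x} hx a ha := by simp only [neg_mul, mul_neg, (hx a ha).1, (hx a ha).2, neg_zero,
    and_self]

@[simp]
theorem coe_annAddSubgroup (s : Set R) : (annAddSubgroup s : Set R) = annSet s := rfl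

theorem annSet_image (φ : R ≃+* R) (s : Set R) : φ '' annSet s = annSet (φ '' s) := by
  ext r
  constructor
  · rintro ⟨x, hx, rfl⟩ _ ⟨a, ha, rfl⟩
    simp only [← map_mul, (hx a ha).1, (hx a ha).2, map_zero, and_self]
  · intro hr
    refine ⟨φ.symm r, fun a ha => ?_, φ.apply_symm_apply r⟩
    obtain ⟨h₁, h₂⟩ := hr (φ a) ⟨a, ha, rfl⟩
    exact ⟨φ.injective (by simp [h₁]), φ.injective (by simp [h₂])⟩

theorem isClosed_annSet [TopologicalSpace R] [ContinuousMul R] [T1Space R] (s : Set R) :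
    IsClosed (annSet s) := by
  have : annSet s = ⋂ a ∈ s, ((· * a) ⁻¹' {0} ∩ (a * ·) ⁻¹' {0}) := by
    ext r
    simp [annSet]
  rw [this]
  exact isClosed_biInter fun a _ =>
    (isClosed_singleton.preimage (continuous_mul_const a)).inter
      (isClosed_singleton.preimage (continuous_const_mul a))

theorem mul_eq_zero_of_mem_annSet_annSet {s : Set R} (hs : s ⊆ annSet s) {x y : R}
    (hx : x ∈ annSet (annSet s)) (hy : y ∈ annSet (annSet s)) : x * y = 0 :=
  (hx y (annSet_anti hs hy)).1

theorem exists_finset_annSet_eq {s : Set R}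
    (hfin : (Set.range fun F : {F : Finset R // ↑F ⊆ s} => annSet (F : Set R)).Finite) :
    ∃ F : Finset R, ↑F ⊆ s ∧ annSet F = annSet s := by
  classical
  obtain ⟨_, ⟨⟨F, hFs⟩, rfl⟩, hmin⟩ := hfin.exists_minimal ⟨_, ⟨⟨∅, by simp⟩, rfl⟩⟩
  refine ⟨F, hFs, Set.Subset.antisymm (fun r hr a ha => ?_) (annSet_anti hFs)⟩
  have hFa : ↑(insert a F) ⊆ s := by
    rw [Finset.coe_insert]
    exact Set.insert_subset ha hFs
  have hsub : annSet ↑(insert a F) ⊆ annSet (F : Set R) :=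
    annSet_anti (Finset.coe_subset.2 (Finset.subset_insert a F))
  exact hmin ⟨⟨_, hFa⟩, rfl⟩ hsub hr a (Finset.mem_insert_self a F)

theorem finite_range_annSet_of_null (H : AddSubgroup R) [H.FiniteIndex]
    (hnull : ∀ x ∈ H, ∀ y ∈ H, x * y = 0) :
    (Set.range fun F : {F : Finset R // ↑F ⊆ (H : Set R)} => annSet (F : Set R)).Finite := by
  refine ((AddSubgroup.finite_setOf_le_of_finiteIndex H).image
    ((↑) : AddSubgroup R → Set R)).subset ?_
  rintro _ ⟨⟨F, hFH⟩, rfl⟩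
  exact ⟨annAddSubgroup F, fun x hx a ha => ⟨hnull x hx a (hFH ha), hnull a (hFH ha) x hx⟩,
    coe_annAddSubgroup _⟩

end NonAssoc

section Assoc

variable {R : Type*} [NonUnitalRing R]

def TwoSidedIdeal.annihilator (I : TwoSidedIdeal R) : TwoSidedIdeal R :=
  .mk' (annSet I) (annAddSubgroup (I : Set R)).zero_mem (annAddSubgroup (I : Set R)).add_mem
    (annAddSubgroup (I : Set R)).neg_mem
    (fun {x y} hy a ha => ⟨by rw [mul_assoc, (hy a ha).1, mul_zero],
      by rw [← mul_assoc, (hy _ (I.mul_mem_right a x ha)).2]⟩)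
    (fun {x y} hx a ha => ⟨by rw [mul_assoc, (hx _ (I.mul_mem_left y a ha)).1],
      by rw [← mul_assoc, (hx a ha).2, zero_mul]⟩)

@[simp]
theorem TwoSidedIdeal.coe_annihilator (I : TwoSidedIdeal R) :
    (I.annihilator : Set R) = annSet I :=
  TwoSidedIdeal.coe_mk' _ _ _ _ _ _

end Assoc

/-- Let `R` be a Hausdorff topological ring with a null two-sided ideal `S` of finite
index.  Then there is a finite subset `F ⊆ S` with `Ann_R(F) = Ann_R(S)`, such that
`Ann_R(Ann_R(F))` is a closed null two-sided ideal of finite index containing `S`;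
consequently, every ring automorphism of `R` fixing `F` pointwise maps
`Ann_R(Ann_R(F))` onto itself. -/
theorem closed_null_ideal_of_null_ideal_finiteIndex
    (R : Type*) [NonUnitalRing R] [TopologicalSpace R] [IsTopologicalRing R] [T2Space R]
    (S : TwoSidedIdeal R)
    (hnull : ∀ x ∈ S, ∀ y ∈ S, x * y = 0)
    (hfi : S.addSubgroup.FiniteIndex) :
    ∃ F : Finset R, (F : Set R) ⊆ (S : Set R) ∧
      annSet (F : Set R) = annSet (S : Set R) ∧
      ∃ I : TwoSidedIdeal R,
        (I : Set R) = annSet (annSet (F : Set R)) ∧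
        IsClosed (I : Set R) ∧
        (∀ x ∈ I, ∀ y ∈ I, x * y = 0) ∧
        I.addSubgroup.FiniteIndex ∧
        (S : Set R) ⊆ (I : Set R) ∧
        ∀ φ : R ≃+* R, (∀ x ∈ F, φ x = x) → φ '' (I : Set R) = (I : Set R) := by
  have := hfi
  obtain ⟨F, hFS, hF⟩ :
      ∃ F : Finset R, (F : Set R) ⊆ S ∧ annSet (F : Set R) = annSet (S : Set R) :=
    exists_finset_annSet_eq (finite_range_annSet_of_null S.addSubgroup hnull)
  have hS : (S : Set R) ⊆ annSet S := fun x hx a ha => ⟨hnull x hx a ha, hnull a ha x hx⟩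
  have hI : (S.annihilator.annihilator : Set R) = annSet (annSet S) := by
    rw [TwoSidedIdeal.coe_annihilator, TwoSidedIdeal.coe_annihilator]
  have hSI : (S : Set R) ⊆ S.annihilator.annihilator := hI ▸ subset_annSet_annSet _
  refine ⟨F, hFS, hF, S.annihilator.annihilator, by rw [hI, hF], hI ▸ isClosed_annSet _,
    fun x hx y hy => ?_, AddSubgroup.finiteIndex_of_le (H := S.addSubgroup) hSI, hSI,
    fun φ hφ => ?_⟩
  · rw [← SetLike.mem_coe, hI] at hx hy
    exact mul_eq_zero_of_mem_annSet_annSet hS hx hy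
  · rw [hI, ← hF, annSet_image, annSet_image, Set.EqOn.image_eq_self hφ]
end
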